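/- Let U be a 2B×2B unitary matrix, fix x_0 ∈ ℝ^B, and set D(t) = e^{i(x_0 + tL)}. Let e^{iθ(t)} be an eigenvalue of the unitary matrix D(t)U, with θ(t) chosen real-analytic in t, and let u(t) be a corresponding normalized eigenvector depending analytically on t. Then dθ/dt = ⟨u(t), L u(t)⟩ = Σ_{j=1}^{B} L_j (|u_j(t)|² + |u_{j+B}(t)|²); in particular L_min ≤ dθ/dt ≤ L_max. -/

import Mathlib

open Matrix MeasureTheory Filter Real Topology

noncomputable section

/-- Index set for the `2B` directed bonds. -/
abbrev Idx (B : ℕ) := Fin B ⊕ Fin B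

/-- The diagonal matrix `e^{ix} = diag(e^{ix_1},…,e^{ix_B},e^{ix_1},…,e^{ix_B})`. -/
def expDiag {B : ℕ} (x : Fin B → ℝ) : Matrix (Idx B) (Idx B) ℂ :=
  Matrix.diagonal fun j => Complex.exp (Complex.I * ((Sum.elim x x j : ℝ) : ℂ))

/-- The diagonal matrix `L = diag(L_1,…,L_B,L_1,…,L_B)`. -/
def matL {B : ℕ} (L : Fin B → ℝ) : Matrix (Idx B) (Idx B) ℂ :=
  Matrix.diagonal fun j => ((Sum.elim L L j : ℝ) : ℂ)

/-- The point `x` (representative in `ℝ^B` of a point of the torus `𝕋^B`)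
lies on the surface `Σ = {x : det(e^{ix}S₀ − I) = 0}`. -/
def onSigma {B : ℕ} (S0 : Matrix (Idx B) (Idx B) ℂ) (x : Fin B → ℝ) : Prop :=
  (expDiag x * S0 - 1).det = 0

/-- Multiplicity of `1` as an eigenvalue of `e^{ix}S₀`. -/
def mult1 {B : ℕ} (S0 : Matrix (Idx B) (Idx B) ℂ) (x : Fin B → ℝ) : ℕ :=
  Module.finrank ℂ (LinearMap.ker (expDiag x * S0 - 1).mulVecLin)

/-- The linear flow `φ_t(x₀) = x₀ + tL` (on representatives in `ℝ^B`). -/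
def flow {B : ℕ} (L : Fin B → ℝ) (x0 : Fin B → ℝ) (t : ℝ) : Fin B → ℝ :=
  fun b => x0 b + t * L b

/-- Hermitian inner product on `ℂ^{2B}`. -/
def herm {B : ℕ} (v w : Idx B → ℂ) : ℂ := ∑ j, star (v j) * w j

/-- `lam` is the nondecreasing enumeration (with multiplicity) of the positive
solutions of `det(I − e^{iλL}S₀) = 0`, multiplicity of `λ` being the multiplicity
of `1` as an eigenvalue of `e^{iλL}S₀`. -/
def IsSpecEnum {B : ℕ} (S0 : Matrix (Idx B) (Idx B) ℂ) (L : Fin B → ℝ)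
    (lam : ℕ → ℝ) : Prop :=
  Monotone lam ∧ (∀ n, 0 < lam n) ∧ Tendsto lam atTop atTop ∧
    ∀ t : ℝ, 0 < t → Nat.card {n | lam n = t} = mult1 S0 (fun b => t * L b)

/-- `θ x` is the ordered (nonincreasing) list of eigenphases of `e^{ix}S₀`:
`0 < θ̂_{2B} ≤ … ≤ θ̂_1 ≤ 2π` (index `0` corresponds to `θ̂_1`), the eigenvalues of
`e^{ix}S₀` being exactly the `e^{iθ̂_j(x)}` with multiplicity. -/
def IsEigenphases {B : ℕ} (S0 : Matrix (Idx B) (Idx B) ℂ)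
    (θ : (Fin B → ℝ) → Fin (2*B) → ℝ) : Prop :=
  ∀ x : Fin B → ℝ,
    (∀ j k : Fin (2*B), j ≤ k → θ x k ≤ θ x j) ∧
    (∀ j, 0 < θ x j ∧ θ x j ≤ 2*π) ∧
    (expDiag x * S0).charpoly.roots
      = Multiset.map (fun j => Complex.exp (Complex.I * ((θ x j : ℝ) : ℂ))) Finset.univ.val

/-- The spacings `σ_j` of an ordered tuple of eigenphases:
`σ_j = θ̂_j − θ̂_{j+1}` and `σ_{2B} = θ̂_{2B} + 2π − θ̂_1`. -/
def spacing {n : ℕ} (θ : Fin n → ℝ) (j : Fin n) : ℝ :=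
  if h : (j : ℕ) + 1 < n then θ j - θ ⟨(j : ℕ) + 1, h⟩
  else θ j + 2*π - θ ⟨0, j.pos⟩

/-- The set `U ⊆ Σ` satisfies the shadow condition: its shadow along the flow
onto the hyperplane `{x_1 = 0}` has zero `(B−1)`-dimensional measure. -/
def ShadowNull {B : ℕ} (hB : 0 < B) (L : Fin B → ℝ) (U : Set (Fin B → ℝ)) : Prop :=
  volume {y : Fin B → ℝ | ∃ t ∈ Set.Ioc 0 (2*π / L ⟨0, hB⟩),
      (fun b => (if b = (⟨0, hB⟩ : Fin B) then 0 else y b) + t * L b) ∈ U} = 0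

/-- The `ε`-thickening `Φ_ε` of a function `Φ` defined on `Σ`. -/
def thick {B : ℕ} (S0 : Matrix (Idx B) (Idx B) ℂ) (L : Fin B → ℝ)
    (Phi : (Fin B → ℝ) → ℝ) (ε : ℝ) (x : Fin B → ℝ) : ℝ :=
  ∑' t : {t : ℝ // |t| ≤ ε/2 ∧ onSigma S0 (flow L x t)}, Phi (flow L x (t : ℝ))

/-- `tseq` enumerates the consecutive (positive) intersection times of the flow
`φ_t(x₀)` with the surface `Σ`. -/
def IsCrossingSeq {B : ℕ} (S0 : Matrix (Idx B) (Idx B) ℂ) (L : Fin B → ℝ)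
    (x0 : Fin B → ℝ) (tseq : ℕ → ℝ) : Prop :=
  StrictMono tseq ∧ (∀ n, 0 < tseq n) ∧ (∀ n, onSigma S0 (flow L x0 (tseq n))) ∧
    ∀ t, 0 < t → onSigma S0 (flow L x0 t) → ∃ n, tseq n = t

/-- The fundamental domain `[0,2π)^B` of the torus `𝕋^B`. -/
def fund (B : ℕ) : Set (Fin B → ℝ) := Set.univ.pi fun _ => Set.Ico (0:ℝ) (2*π)

/-
Differentiating the eigen-equation `D(t) U u = e^{iθ} u` with `D' = i L D` gives
`i L e^{iθ} u + D U u' = i θ' e^{iθ} u + e^{iθ} u'`. Pairing with `u` and using that `u` is also an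
eigenvector of the adjoint `(D U)^* = (D U)^{-1}`, the two terms containing `u'` coincide, leaving
`θ' = ⟨u, L u⟩`, a convex combination of the bond lengths because `‖u‖ = 1`.
-/

section Unitary

variable {n α : Type*} [Fintype n] [DecidableEq n] [CommRing α] [StarRing α]

theorem diagonal_mem_unitaryGroup {d : n → α} (hd : ∀ i, star (d i) * d i = 1) :
    diagonal d ∈ unitaryGroup n α := by
  rw [mem_unitaryGroup_iff', star_eq_conjTranspose, diagonal_conjTranspose,
    diagonal_mul_diagonal, ← diagonal_one]
  exact congrArg diagonal (funext hd)

theorem conjTranspose_mulVec_eq_star_smul {A : Matrix n n α} (hA : A ∈ unitaryGroup n α)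
    {c : α} (hc : star c * c = 1) {u : n → α} (h : A *ᵥ u = c • u) :
    Aᴴ *ᵥ u = star c • u := by
  have hinv : c • (Aᴴ *ᵥ u) = u := by
    rw [← mulVec_smul, ← h, mulVec_mulVec, ← star_eq_conjTranspose,
      mem_unitaryGroup_iff'.1 hA, one_mulVec]
  calc Aᴴ *ᵥ u = (star c * c) • (Aᴴ *ᵥ u) := by rw [hc, one_smul]
    _ = star c • u := by rw [mul_smul, hinv]

theorem star_dotProduct_mulVec_of_mulVec_eq_smul {A : Matrix n n α}
    (hA : A ∈ unitaryGroup n α) {c : α} (hc : star c * c = 1) {u : n → α}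
    (h : A *ᵥ u = c • u) (w : n → α) :
    star u ⬝ᵥ (A *ᵥ w) = c * (star u ⬝ᵥ w) := by
  have hadj : star u ᵥ* A = star (Aᴴ *ᵥ u) := by
    rw [star_mulVec, conjTranspose_conjTranspose]
  rw [dotProduct_mulVec, hadj, conjTranspose_mulVec_eq_star_smul hA hc h, star_smul,
    star_star, smul_dotProduct, smul_eq_mul]

theorem star_cexp_I_mul_ofReal_mul_self (r : ℝ) :
    star (Complex.exp (Complex.I * r)) * Complex.exp (Complex.I * r) = 1 := by
  rw [Complex.star_def, Complex.conj_mul', mul_comm, Complex.norm_exp_ofReal_mul_I]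
  norm_num

/-- `hderiv` is the eigen-equation `A u = e^{iθ} u` differentiated along a unitary family with
`A' = i K A`, `θ'` and `u'` being the derivatives of `θ` and `u`. -/
theorem eigenphase_deriv_eq_star_dotProduct_mulVec {A K : Matrix n n ℂ}
    (hA : A ∈ unitaryGroup n ℂ) {θ θ' : ℝ} {u u' : n → ℂ}
    (heig : A *ᵥ u = Complex.exp (Complex.I * θ) • u) (hnorm : star u ⬝ᵥ u = 1)
    (hderiv : Complex.I • K *ᵥ (A *ᵥ u) + A *ᵥ u'
      = (Complex.exp (Complex.I * θ) * (Complex.I * θ')) • u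
        + Complex.exp (Complex.I * θ) • u') :
    (θ' : ℂ) = star u ⬝ᵥ (K *ᵥ u) := by
  set c := Complex.exp (Complex.I * θ)
  have hpair := congrArg (star u ⬝ᵥ ·) hderiv
  simp only [dotProduct_add, dotProduct_smul, smul_eq_mul, heig, mulVec_smul,
    star_dotProduct_mulVec_of_mulVec_eq_smul hA (star_cexp_I_mul_ofReal_mul_self θ) heig,
    hnorm] at hpair
  have hc : Complex.I * c ≠ 0 := mul_ne_zero Complex.I_ne_zero (Complex.exp_ne_zero _)
  exact mul_left_cancel₀ hc (by linear_combination -hpair)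

end Unitary

theorem HasDerivAt.matrix_mulVec {𝕜 𝔸 m n : Type*} [NontriviallyNormedField 𝕜] [NormedRing 𝔸]
    [NormedAlgebra 𝕜 𝔸] [Fintype m] [Fintype n] (M : Matrix m n 𝔸) {v : 𝕜 → n → 𝔸}
    {v' : n → 𝔸} {t : 𝕜} (hv : HasDerivAt v v' t) :
    HasDerivAt (fun s => M *ᵥ v s) (M *ᵥ v') t := by
  rw [hasDerivAt_pi] at hv ⊢
  exact fun i => HasDerivAt.fun_sum fun k _ => (hv k).const_mul (M i k)

theorem le_sum_mul_of_sum_eq_one {ι : Type*} [Fintype ι] {f w : ι → ℝ} {a : ℝ}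
    (hw : ∀ i, 0 ≤ w i) (hw1 : ∑ i, w i = 1) (ha : ∀ i, a ≤ f i) :
    a ≤ ∑ i, f i * w i :=
  calc a = ∑ i, a * w i := by rw [← Finset.mul_sum, hw1, mul_one]
    _ ≤ ∑ i, f i * w i := Finset.sum_le_sum fun i _ => mul_le_mul_of_nonneg_right (ha i) (hw i)

theorem sum_mul_le_of_sum_eq_one {ι : Type*} [Fintype ι] {f w : ι → ℝ} {a : ℝ}
    (hw : ∀ i, 0 ≤ w i) (hw1 : ∑ i, w i = 1) (ha : ∀ i, f i ≤ a) :
    ∑ i, f i * w i ≤ a :=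
  calc ∑ i, f i * w i ≤ ∑ i, a * w i :=
        Finset.sum_le_sum fun i _ => mul_le_mul_of_nonneg_right (ha i) (hw i)
    _ = a := by rw [← Finset.mul_sum, hw1, mul_one]

section QuantumGraph

variable {B : ℕ}

theorem expDiag_mem_unitaryGroup (x : Fin B → ℝ) : expDiag x ∈ unitaryGroup (Idx B) ℂ :=
  diagonal_mem_unitaryGroup fun _ => star_cexp_I_mul_ofReal_mul_self _

theorem hasDerivAt_expDiag_flow_mulVec (L x0 : Fin B → ℝ) {v : ℝ → Idx B → ℂ}
    {v' : Idx B → ℂ} {t : ℝ} (hv : HasDerivAt v v' t) :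
    HasDerivAt (fun s => expDiag (flow L x0 s) *ᵥ v s)
      (Complex.I • matL L *ᵥ (expDiag (flow L x0 t) *ᵥ v t) + expDiag (flow L x0 t) *ᵥ v') t := by
  rw [hasDerivAt_pi] at hv ⊢
  intro j
  have hflow : ∀ s, Sum.elim (flow L x0 s) (flow L x0 s) j
      = Sum.elim x0 x0 j + s * Sum.elim L L j := by
    cases j <;> exact fun _ => rfl
  have hphase : HasDerivAt (fun s : ℝ => Sum.elim (flow L x0 s) (flow L x0 s) j)
      (Sum.elim L L j) t := by
    simp only [hflow]
    simpa using ((hasDerivAt_id t).mul_const (Sum.elim L L j)).const_add (Sum.elim x0 x0 j)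
  simp only [expDiag, matL, mulVec_diagonal, Pi.add_apply, Pi.smul_apply, smul_eq_mul]
  exact ((hphase.ofReal_comp.const_mul Complex.I).cexp.fun_mul (hv j)).congr_deriv (by ring)

theorem hasDerivAt_eigen_equation {L x0 : Fin B → ℝ} {U : Matrix (Idx B) (Idx B) ℂ}
    {θ : ℝ → ℝ} {u : ℝ → Idx B → ℂ}
    (heig : ∀ s, (expDiag (flow L x0 s) * U) *ᵥ u s = Complex.exp (Complex.I * θ s) • u s)
    {θ' t : ℝ} {u' : Idx B → ℂ} (hθ : HasDerivAt θ θ' t) (hu : HasDerivAt u u' t) :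
    Complex.I • matL L *ᵥ ((expDiag (flow L x0 t) * U) *ᵥ u t)
        + (expDiag (flow L x0 t) * U) *ᵥ u'
      = (Complex.exp (Complex.I * θ t) * (Complex.I * θ')) • u t
        + Complex.exp (Complex.I * θ t) • u' := by
  have hlhs := hasDerivAt_expDiag_flow_mulVec L x0 (hu.matrix_mulVec U)
  have hfun : (fun s => expDiag (flow L x0 s) *ᵥ (U *ᵥ u s))
      = fun s => Complex.exp (Complex.I * θ s) • u s :=
    funext fun s => by rw [mulVec_mulVec, heig]
  rw [hfun] at hlhs
  simp only [mulVec_mulVec (M := expDiag (flow L x0 t)) (N := U)] at hlhs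
  have hrhs := ((hθ.ofReal_comp.const_mul Complex.I).cexp).smul hu
  exact (hlhs.unique hrhs).trans (add_comm _ _)

theorem herm_matL_mulVec (L : Fin B → ℝ) (v : Idx B → ℂ) :
    herm v (matL L *ᵥ v) = ((∑ j, L j * (‖v (Sum.inl j)‖ ^ 2 + ‖v (Sum.inr j)‖ ^ 2) : ℝ) : ℂ) := by
  simp only [herm, matL, mulVec_diagonal, Fintype.sum_sum_type, Sum.elim_inl, Sum.elim_inr,
    ← Finset.sum_add_distrib, mul_left_comm _ (L _ : ℂ), Complex.star_def, Complex.conj_mul']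
  push_cast
  exact Finset.sum_congr rfl fun j _ => by ring

theorem herm_self (v : Idx B → ℂ) :
    herm v v = ((∑ j, (‖v (Sum.inl j)‖ ^ 2 + ‖v (Sum.inr j)‖ ^ 2) : ℝ) : ℂ) := by
  simp only [herm, Fintype.sum_sum_type, ← Finset.sum_add_distrib, Complex.star_def,
    Complex.conj_mul']
  push_cast
  rfl

end QuantumGraph

theorem eigenphase_derivative_general {B : ℕ}
    (L : Fin B → ℝ)
    (Lmin Lmax : ℝ) (hmin : IsLeast (Set.range L) Lmin)
    (hmax : IsGreatest (Set.range L) Lmax)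
    (U : Matrix (Idx B) (Idx B) ℂ) (hU : U ∈ Matrix.unitaryGroup (Idx B) ℂ)
    (x0 : Fin B → ℝ) (θ : ℝ → ℝ) (u : ℝ → Idx B → ℂ)
    (hθa : ∀ t, AnalyticAt ℝ θ t) (hua : ∀ t j, AnalyticAt ℝ (fun s => u s j) t)
    (heig : ∀ t, (expDiag (fun b => x0 b + t * L b) * U).mulVec (u t)
        = Complex.exp (Complex.I * (θ t : ℂ)) • u t)
    (hnorm : ∀ t, herm (u t) (u t) = 1) :
    ∀ t : ℝ,
      (((deriv θ t : ℝ) : ℂ) = herm (u t) ((matL L).mulVec (u t)) ∧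
        deriv θ t = ∑ j : Fin B, L j *
          (‖u t (Sum.inl j)‖^2 + ‖u t (Sum.inr j)‖^2)) ∧
      Lmin ≤ deriv θ t ∧ deriv θ t ≤ Lmax := by
  intro t
  have hθ : HasDerivAt θ (deriv θ t) t := (hθa t).differentiableAt.hasDerivAt
  have hu : HasDerivAt u (fun j => deriv (fun s => u s j) t) t :=
    hasDerivAt_pi.2 fun j => (hua t j).differentiableAt.hasDerivAt
  have hvel : ((deriv θ t : ℝ) : ℂ) = herm (u t) (matL L *ᵥ u t) :=
    eigenphase_deriv_eq_star_dotProduct_mulVec (mul_mem (expDiag_mem_unitaryGroup _) hU)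
      (heig t) (hnorm t) (hasDerivAt_eigen_equation heig hθ hu)
  have hvel_real : deriv θ t = ∑ j, L j * (‖u t (Sum.inl j)‖ ^ 2 + ‖u t (Sum.inr j)‖ ^ 2) := by
    exact_mod_cast hvel.trans (herm_matL_mulVec L (u t))
  have hweights : ∑ j, (‖u t (Sum.inl j)‖ ^ 2 + ‖u t (Sum.inr j)‖ ^ 2) = 1 := by
    exact_mod_cast (herm_self (u t)).symm.trans (hnorm t)
  refine ⟨⟨hvel, hvel_real⟩, ?_, ?_⟩ <;> rw [hvel_real]
  · exact le_sum_mul_of_sum_eq_one (fun _ => by positivity) hweights fun j => hmin.2 ⟨j, rfl⟩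
  · exact sum_mul_le_of_sum_eq_one (fun _ => by positivity) hweights fun j => hmax.2 ⟨j, rfl⟩

/-- (Lemma `lem:main`.)  If `e^{iθ(t)}` is an eigenvalue of the
unitary matrix `D(t)U = e^{i(x₀+tL)}U`, with `θ` real-analytic and `u(t)` a
corresponding analytically chosen normalized eigenvector, then
`dθ/dt = ⟨u(t), L u(t)⟩ = Σ_j L_j(|u_j|² + |u_{j+B}|²)`; in particular
`L_min ≤ dθ/dt ≤ L_max`. -/
theorem eigenphase_derivative {B : ℕ} (hB : 0 < B)
    (L : Fin B → ℝ) (hL : ∀ b, 0 < L b)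
    (Lmin Lmax : ℝ) (hmin : IsLeast (Set.range L) Lmin)
    (hmax : IsGreatest (Set.range L) Lmax)
    (U : Matrix (Idx B) (Idx B) ℂ) (hU : U ∈ Matrix.unitaryGroup (Idx B) ℂ)
    (x0 : Fin B → ℝ) (θ : ℝ → ℝ) (u : ℝ → Idx B → ℂ)
    (hθa : ∀ t, AnalyticAt ℝ θ t) (hua : ∀ t j, AnalyticAt ℝ (fun s => u s j) t)
    (heig : ∀ t, (expDiag (fun b => x0 b + t * L b) * U).mulVec (u t)
        = Complex.exp (Complex.I * (θ t : ℂ)) • u t)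
    (hnorm : ∀ t, herm (u t) (u t) = 1) :
    ∀ t : ℝ,
      (((deriv θ t : ℝ) : ℂ) = herm (u t) ((matL L).mulVec (u t)) ∧
        deriv θ t = ∑ j : Fin B, L j *
          (‖u t (Sum.inl j)‖^2 + ‖u t (Sum.inr j)‖^2)) ∧
      Lmin ≤ deriv θ t ∧ deriv θ t ≤ Lmax :=
  eigenphase_derivative_general L Lmin Lmax hmin hmax U hU x0 θ u hθa hua heig hnorm
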